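/- arXiv:1111.6574 — 2 statements merged into one kernel-verified Lean document; each statement's English description precedes it below -/
import Mathlib

section
/- Let $\rho \in \mathbb{T}^D$ satisfy a Diophantine condition with constants $c > 0$, $d > 1$ (i.e. $d(\theta_* + n\rho, \theta_*) \geq c n^{-d}$ for all $n \geq 1$), and set $r_k = \frac{b}{2} a^{-(k-1)/m}$ with $a > 1$, $0 < b \leq c$, $m \in \mathbb{N}$, $a \geq (m+1)^d$. Then the limsup set $\Omega_\infty = \bigcap_{i=0}^\infty \bigcup_{k=i+1}^\infty B_{r_k}(\tau_k)$, where $\tau_k = \theta_* + k\rho \bmod 1$, has Hausdorff dimension zero. -/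
open Metric MeasureTheory Filter Set
open scoped ENNReal Topology

/-!
The radii `r k` decay geometrically, so for every `s > 0` the series `∑ (diam B_k)^s`
converges. Covering the limsup set by the tail `{B_k : k ≥ n}` of the balls then bounds its
`s`-dimensional Hausdorff measure by the tail of a convergent series, which tends to zero
(Hausdorff–Cantelli). Hence `μH[s] Ω∞ = 0` for all `s > 0`.
-/

section HausdorffCantelli

variable {X : Type*} [EMetricSpace X]

theorem hausdorffMeasure_limsup_eq_zero_of_tsum_ediam_rpow_ne_top [MeasurableSpace X]
    [BorelSpace X] {s : ℝ} (hs : 0 < s) {E : ℕ → Set X}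
    (hE : ∑' k, ediam (E k) ^ s ≠ ∞) : μH[s] (limsup E atTop) = 0 := by
  set tail : ℕ → ℝ≥0∞ := fun n => ∑' j, ediam (E (j + n)) ^ s
  have htail : Tendsto tail atTop (𝓝 0) := ENNReal.tendsto_sum_nat_add _ hE
  have hradius : Tendsto (fun n => tail n ^ s⁻¹) atTop (𝓝 0) := by
    simpa [ENNReal.zero_rpow_of_pos (inv_pos.2 hs)] using htail.ennrpow_const s⁻¹
  have hdiam : ∀ n j, ediam (E (j + n)) ≤ tail n ^ s⁻¹ := fun n j =>
    (ENNReal.le_rpow_inv_iff hs).2 (ENNReal.le_tsum (f := fun j => ediam (E (j + n)) ^ s) j)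
  have hcover : ∀ n, limsup E atTop ⊆ ⋃ j, E (j + n) := fun n => by
    rw [limsup_eq_iInf_iSup_of_nat']
    exact iInter_subset (fun n => ⋃ j, E (j + n)) n
  refine nonpos_iff_eq_zero.1 ?_
  calc μH[s] (limsup E atTop)
      ≤ liminf tail atTop :=
        Measure.hausdorffMeasure_le_liminf_tsum s _ _ hradius (fun n j => E (j + n))
          (Eventually.of_forall hdiam) (Eventually.of_forall hcover)
    _ = 0 := htail.liminf_eq

theorem dimH_limsup_eq_zero_of_tsum_ediam_rpow_ne_top {E : ℕ → Set X}
    (hE : ∀ s : ℝ, 0 < s → ∑' k, ediam (E k) ^ s ≠ ∞) : dimH (limsup E atTop) = 0 := by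
  borelize X
  refine nonpos_iff_eq_zero.1 (dimH_le fun t ht => ?_)
  rcases eq_zero_or_pos t with rfl | ht0
  · simp
  · rw [hausdorffMeasure_limsup_eq_zero_of_tsum_ediam_rpow_ne_top (NNReal.coe_pos.2 ht0)
      (hE t ht0)] at ht
    exact absurd ht ENNReal.zero_ne_top

end HausdorffCantelli

theorem dimH_limsup_ball_eq_zero_of_le_geometric {X : Type*} [MetricSpace X] (x : ℕ → X)
    {r : ℕ → ℝ} {C q : ℝ} (hq₀ : 0 ≤ q) (hq₁ : q < 1) (hr : ∀ k, r k ≤ C * q ^ k) :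
    dimH (limsup (fun k => ball (x k) (r k)) atTop) = 0 := by
  refine dimH_limsup_eq_zero_of_tsum_ediam_rpow_ne_top fun s hs => ?_
  have hratio : ENNReal.ofReal q ^ s < 1 :=
    ENNReal.rpow_lt_one (ENNReal.ofReal_lt_one.2 hq₁) hs
  have hterm : ∀ k, ediam (ball (x k) (r k)) ^ s ≤
      (2 * ENNReal.ofReal C) ^ s * (ENNReal.ofReal q ^ s) ^ k := fun k => by
    have hball : ediam (ball (x k) (r k)) ≤ 2 * ENNReal.ofReal C * ENNReal.ofReal q ^ k := by
      calc ediam (ball (x k) (r k)) ≤ 2 * ENNReal.ofReal (r k) := by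
            rw [← eball_ofReal]; exact ediam_eball_le
        _ ≤ 2 * ENNReal.ofReal (C * q ^ k) := by gcongr; exact hr k
        _ = 2 * ENNReal.ofReal C * ENNReal.ofReal q ^ k := by
            rw [ENNReal.ofReal_mul' (pow_nonneg hq₀ k), ENNReal.ofReal_pow hq₀, mul_assoc]
    calc ediam (ball (x k) (r k)) ^ s
        ≤ (2 * ENNReal.ofReal C * ENNReal.ofReal q ^ k) ^ s := by gcongr
      _ = (2 * ENNReal.ofReal C) ^ s * (ENNReal.ofReal q ^ s) ^ k := by
          rw [ENNReal.mul_rpow_of_nonneg _ _ hs.le, ← ENNReal.rpow_natCast,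
            ← ENNReal.rpow_natCast, ← ENNReal.rpow_mul, ← ENNReal.rpow_mul, mul_comm s]
  refine ne_top_of_le_ne_top ?_ (ENNReal.tsum_le_tsum hterm)
  rw [ENNReal.tsum_mul_left, ENNReal.tsum_geometric]
  have hconst : 2 * ENNReal.ofReal C ≠ ∞ :=
    ENNReal.mul_ne_top ENNReal.ofNat_ne_top ENNReal.ofReal_ne_top
  exact ENNReal.mul_ne_top (ENNReal.rpow_ne_top_of_nonneg hs.le hconst)
    (ENNReal.inv_ne_top.2 (tsub_pos_of_lt hratio).ne')

theorem Real.rpow_neg_sub_one_div_eq_mul_pow {a : ℝ} (ha : 0 < a) (m : ℝ) (k : ℕ) :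
    a ^ (-((k : ℝ) - 1) / m) = a ^ (1 / m) * (a ^ (-1 / m)) ^ k := by
  rw [← Real.rpow_natCast, ← Real.rpow_mul ha.le, ← Real.rpow_add ha]
  congr 1
  ring

theorem iInter_iUnion_gt_eq_limsup_atTop {α : Type*} (E : ℕ → Set α) :
    ⋂ i, ⋃ k, ⋃ _ : i < k, E k = limsup E atTop := by
  ext x
  simp [mem_limsup_iff_frequently_mem, frequently_atTop']

theorem dimH_limsup_balls_eq_zero_general
    {D : ℕ} (τ : ℕ → Fin D → AddCircle (1 : ℝ)) (a b : ℝ) (m : ℕ) (hm : 0 < m) (ha : 1 < a)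
    (r : ℕ → ℝ) (hr : ∀ k, r k = b / 2 * a ^ (-((k : ℝ) - 1) / m)) :
    dimH (⋂ i, ⋃ k, ⋃ _ : i < k, ball (τ k) (r k)) = 0 := by
  have ha₀ : 0 < a := by linarith
  have hratio : a ^ (-1 / (m : ℝ)) < 1 :=
    Real.rpow_lt_one_of_one_lt_of_neg ha (div_neg_of_neg_of_pos (by norm_num) (by positivity))
  rw [iInter_iUnion_gt_eq_limsup_atTop]
  refine dimH_limsup_ball_eq_zero_of_le_geometric (C := b / 2 * a ^ (1 / (m : ℝ))) τ
    (Real.rpow_nonneg ha₀.le _) hratio fun k => ?_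
  rw [hr k, Real.rpow_neg_sub_one_div_eq_mul_pow ha₀, mul_assoc]

/-- The limsup set `Ω∞ = ⋂ᵢ ⋃_{k>i} B_{r_k}(τ_k)` with `r_k = (b/2) a^{-(k-1)/m}`
has Hausdorff dimension zero, under the Diophantine condition on the rotation. -/
theorem dimH_limsup_balls_eq_zero
    {D : ℕ} (θstar ρ : Fin D → AddCircle (1 : ℝ))
    (τ : ℕ → Fin D → AddCircle (1 : ℝ)) (hτ : ∀ k, τ k = θstar + k • ρ)
    (c d a b : ℝ) (m : ℕ) (hm : 0 < m)
    (hc : 0 < c) (hd : 1 < d) (ha : 1 < a) (hb : 0 < b) (hbc : b ≤ c)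
    (ham : a ≥ ((m : ℝ) + 1) ^ d)
    (hDio : ∀ n : ℕ, 1 ≤ n → dist (τ n) θstar ≥ c * (n : ℝ) ^ (-d))
    (r : ℕ → ℝ) (hr : ∀ k, r k = b / 2 * a ^ (-((k : ℝ) - 1) / m)) :
    dimH (⋂ i, ⋃ k, ⋃ _ : i < k, ball (τ k) (r k)) = 0 :=
  dimH_limsup_balls_eq_zero_general τ a b m hm ha r hr
end

section
/- Let $a > 1$, $d > 1$, $m \in \mathbb{N}$, $b > 0$, and define $r_k = \frac{b}{2}a^{-(k-1)/m}$ and $v(j) = a^{(j-1)/(dm)} + j$. Suppose $\tau_k = \theta_* + k\rho$ satisfies the Diophantine condition $d(\tau_k, \theta_*) \geq c k^{-d}$ with $b \leq c$. Then for all $j < j'$ with $B_{r_j}(\tau_j) \cap B_{r_{j'}}(\tau_{j'}) \neq \emptyset$, we have $j' > v(j)$. -/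
open Metric Set

/-- Separation of the balls `B_{r_k}(τ_k)`: if `B_{r_j}(τ_j)` and `B_{r_{j'}}(τ_{j'})`
intersect for `j < j'`, then `j' > v(j) = a^{(j-1)/(dm)} + j`. -/
theorem intersecting_balls_index_gap
    {D : ℕ} (θstar ρ : Fin D → AddCircle (1 : ℝ))
    (τ : ℕ → Fin D → AddCircle (1 : ℝ)) (hτ : ∀ k, τ k = θstar + k • ρ)
    (c d a b : ℝ) (m : ℕ) (hm : 0 < m)
    (hc : 0 < c) (hd : 1 < d) (ha : 1 < a) (hb : 0 < b) (hbc : b ≤ c)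
    (hDio : ∀ k : ℕ, 1 ≤ k → dist (τ k) θstar ≥ c * (k : ℝ) ^ (-d))
    (r : ℕ → ℝ) (hr : ∀ k, r k = b / 2 * a ^ (-((k : ℝ) - 1) / m))
    (v : ℕ → ℝ) (hv : ∀ j, v j = a ^ (((j : ℝ) - 1) / (d * m)) + j) :
    ∀ j j' : ℕ, 1 ≤ j → j < j' →
      (ball (τ j) (r j) ∩ ball (τ j') (r j')).Nonempty → (j' : ℝ) > v j := by
  intro j j' hj hjj' ⟨x, hx1, hx2⟩
  have ha0 : (0:ℝ) < a := lt_trans one_pos ha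
  have hd0 : (0:ℝ) < d := lt_trans one_pos hd
  have hm0 : (0:ℝ) < m := by exact_mod_cast hm
  obtain ⟨n, hn1, rfl⟩ : ∃ n, 1 ≤ n ∧ j' = j + n :=
    ⟨j' - j, by omega, by omega⟩
  have hn0 : (0:ℝ) < n := by exact_mod_cast hn1
  -- r (j+n) ≤ r j
  have hrle : r (j + n) ≤ r j := by
    rw [hr, hr]
    apply mul_le_mul_of_nonneg_left _ (by positivity : (0:ℝ) ≤ b / 2)
    apply Real.rpow_le_rpow_left_iff ha |>.mpr
    have : (j:ℝ) ≤ ((j:ℝ) + n) := by linarith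
    push_cast
    rw [div_le_div_iff_of_pos_right hm0]
    linarith
  -- distance bound
  have hdist : dist (τ (j + n)) (τ j) < 2 * r j := by
    calc dist (τ (j + n)) (τ j) ≤ dist (τ (j + n)) x + dist x (τ j) :=
          dist_triangle _ _ _
      _ < r (j + n) + r j := by
          have h1 : dist x (τ j) < r j := mem_ball.mp hx1
          have h2 : dist x (τ (j + n)) < r (j + n) := mem_ball.mp hx2
          rw [dist_comm (τ (j+n)) x]; linarith
      _ ≤ 2 * r j := by linarith
  -- translation invariance
  have heq : dist (τ (j + n)) (τ j) = dist (τ n) θstar := by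
    rw [hτ, hτ, hτ, dist_eq_norm, dist_eq_norm]
    congr 1
    push_cast
    rw [add_nsmul]
    abel
  have hDn := hDio n hn1
  -- chain of inequalities
  have key : c * (n:ℝ) ^ (-d) < c * a ^ (-((j:ℝ) - 1) / m) := by
    have h2r : 2 * r j = b * a ^ (-((j:ℝ) - 1) / m) := by rw [hr]; ring
    have : c * (n:ℝ) ^ (-d) < b * a ^ (-((j:ℝ)-1)/m) := by
      rw [← h2r]; calc c * (n:ℝ) ^ (-d) ≤ dist (τ n) θstar := hDn
        _ = dist (τ (j+n)) (τ j) := heq.symm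
        _ < 2 * r j := hdist
    calc c * (n:ℝ) ^ (-d) < b * a ^ (-((j:ℝ)-1)/m) := this
      _ ≤ c * a ^ (-((j:ℝ)-1)/m) :=
        mul_le_mul_of_nonneg_right hbc (Real.rpow_nonneg ha0.le _)
  have key2 : (n:ℝ) ^ (-d) < a ^ (-((j:ℝ) - 1) / m) :=
    (mul_lt_mul_iff_right₀ hc).mp key
  -- turn into a^{(j-1)/m} < n^d
  have key3 : a ^ (((j:ℝ) - 1) / m) < (n:ℝ) ^ d := by
    have hne : -((j:ℝ) - 1) / m = -(((j:ℝ) - 1) / m) := by ring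
    rw [hne, Real.rpow_neg ha0.le, Real.rpow_neg hn0.le] at key2
    have h1 : (0:ℝ) < (n:ℝ) ^ d := Real.rpow_pos_of_pos hn0 _
    have h2 : (0:ℝ) < a ^ (((j:ℝ) - 1) / m) := Real.rpow_pos_of_pos ha0 _
    exact (inv_lt_inv₀ h1 h2).mp key2
  -- take 1/d powers
  have key4 : a ^ (((j:ℝ) - 1) / (d * m)) < (n:ℝ) := by
    have h := Real.rpow_lt_rpow (Real.rpow_pos_of_pos ha0 _).le key3
      (by positivity : (0:ℝ) < 1 / d)
    rw [← Real.rpow_mul ha0.le, ← Real.rpow_mul hn0.le,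
      mul_one_div d d, div_self hd0.ne', Real.rpow_one] at h
    have hexp : ((j:ℝ) - 1) / m * (1 / d) = ((j:ℝ) - 1) / (d * m) := by
      rw [mul_one_div, div_div, mul_comm (m:ℝ) d]
    rwa [hexp] at h
  rw [hv]
  push_cast
  linarith
end
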